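/- Let A be a symmetric positive definite real 3×3 matrix, u ∈ ℝ³ a unit vector, γ, k_R, k_β, k_θ > 0, J a symmetric positive definite 3×3 matrix, Γ a symmetric positive definite 3×3 matrix, and Σ a 3×3 matrix with Σᵀ = −Σ. Let R_e, R̃ : ℝ → ℝ^{3×3}, θ, θ̄ : ℝ → ℝ, ω : ℝ → ℝ³, t₀ ∈ ℝ. Write values at t₀ with subscript 0, and set ψ_e := ψ(A·T(R_e(t₀),θ(t₀))), p := ψ(A·T(R̃(t₀),θ̄(t₀))), q := Ra(θ̄(t₀),u)·p, β₀ := Γq. Suppose at t₀: R_e has derivative R_e(t₀)·ω₀^×; θ has derivative −k_θ(γθ₀ + 2uᵀψ_e); R̃ has derivative R̃(t₀)·(ω₀ − β₀)^×; θ̄ has derivative −k_θ(γθ̄₀ + 2uᵀp); and ω has derivative J⁻¹(Σω₀ − 2k_R·Ra(θ₀,u)ψ_e − 2k_β·q). Then the map t ↦ k_R·U(R_e(t),θ(t)) + k_β·U(R̃(t),θ̄(t)) + (1/2)ω(t)ᵀJω(t) has derivative −k_R k_θ (γθ₀ + 2uᵀψ_e)² − k_β k_θ (γθ̄₀ + 2uᵀp)²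 − 2k_β qᵀΓq at t₀. -/

import Mathlib

open Matrix

noncomputable section

abbrev M3 : Type := Matrix (Fin 3) (Fin 3) ℝ
abbrev V3 : Type := Fin 3 → ℝ

/-- skew-symmetric matrix associated to `x`: `skew x *ᵥ y = x ×₃ y`. -/
def skew (x : V3) : M3 :=
  !![0, -x 2, x 1; x 2, 0, -x 0; -x 1, x 0, 0]

/-- the special orthogonal group SO(3) as a subset of 3×3 matrices -/
def SO3 : Set M3 := {R | Rᵀ * R = 1 ∧ R.det = 1}

/-- Rodrigues formula -/
def Ra (θ : ℝ) (u : V3) : M3 :=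
  1 + Real.sin θ • skew u + (1 - Real.cos θ) • (skew u * skew u)

/-- `psi M = vec (P_a M)`, the vector part of the antisymmetric projection -/
def psi (M : M3) : V3 :=
  ![(M 2 1 - M 1 2) / 2, (M 0 2 - M 2 0) / 2, (M 1 0 - M 0 1) / 2]

/-- the angular-warping transformation `T(R,θ) = R · Ra(θ,u)` -/
def Tmap (u : V3) (R : M3) (θ : ℝ) : M3 := R * Ra θ u

/-- the potential function `U(R,θ)` on SO(3) × ℝ -/
def Ufun (A : M3) (u : V3) (γ : ℝ) (R : M3) (θ : ℝ) : ℝ :=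
  (A * (1 - Tmap u R θ)).trace + γ / 2 * θ ^ 2

/-- Euclidean norm on ℝ³ -/
def enorm3 (x : V3) : ℝ := Real.sqrt (x ⬝ᵥ x)

/-- Frobenius norm of a 3×3 matrix -/
def fnorm (M : M3) : ℝ := Real.sqrt ((Mᵀ * M).trace)

/-- `E(M) := (tr(M) I − Mᵀ)/2` -/
def Emap (M : M3) : M3 := (2⁻¹ : ℝ) • (M.trace • (1 : M3) - Mᵀ)

/-- `D_R(R,θ)` from Lemma 2 -/
def DR (A : M3) (u : V3) (R : M3) (θ : ℝ) : M3 :=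
  Ra θ u * Emap (A * Tmap u R θ) * (Ra θ u)ᵀ

/-- `D_θ(R,θ)` from Lemma 2 -/
def Dθ (A : M3) (u : V3) (R : M3) (θ : ℝ) : V3 :=
  (Ra θ u * Emap (A * Tmap u R θ)) *ᵥ u - skew (Ra θ u *ᵥ psi (A * Tmap u R θ)) *ᵥ u

/-- Δ(v,u) from the construction of the synergistic gap -/
def Delta (A : M3) (v u : V3) : ℝ :=
  u ⬝ᵥ ((A.trace • (1 : M3) - A - (2 * (v ⬝ᵥ A *ᵥ v)) • ((1 : M3) - vecMulVec v v)) *ᵥ u)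

/-- `v` is a unit eigenvector of `A` -/
def IsUnitEigen (A : M3) (v : V3) : Prop :=
  v ⬝ᵥ v = 1 ∧ ∃ lam : ℝ, A *ᵥ v = lam • v

/-- Ā := (tr(A) I − A)/2 -/
def Abar (A : M3) : M3 := (2⁻¹ : ℝ) • (A.trace • (1 : M3) - A)

/-- `lam` is an eigenvalue of `M` -/
def IsEigen (M : M3) (lam : ℝ) : Prop := ∃ w : V3, w ≠ 0 ∧ M *ᵥ w = lam • w
attribute [local instance] Matrix.normedAddCommGroup Matrix.normedSpace

/-!
Along `R' = R ω^×` the trace term of `U` has derivative `tr(A R ω^× Ra) + θ' tr(A T u^×)`,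
because `θ ↦ Ra(θ, u)` is a one-parameter subgroup of SO(3), so `∂θ Ra = Ra u^×`. Conjugation
by a rotation maps `ω^×` to `(Raᵀ ω)^×`, and `tr(M x^×) = -2 xᵀ ψ(M)`, hence
`dU = 2 ωᵀ Ra ψ + θ' (γ θ + 2 uᵀ ψ)`. The kinetic energy contributes
`ωᵀ (Σ ω - 2 k_R Ra ψ_e - 2 k_β q)`: the `Σ` term vanishes by skew-symmetry, the other two
cancel the `ω`-terms of the two potentials up to `-2 k_β qᵀ Γ q`, and the laws for `θ, θ̄` turn
the `θ'`-terms into negative squares.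
-/

theorem skew_mulVec (x y : V3) : skew x *ᵥ y = x ⨯₃ y := by
  ext i
  fin_cases i <;> simp [skew, cross_apply, mulVec, dotProduct, Fin.sum_univ_three] <;> ring

theorem transpose_skew (x : V3) : (skew x)ᵀ = -skew x := by
  ext i j
  fin_cases i <;> fin_cases j <;> simp [skew]

theorem skew_mul_skew_mul_skew (x : V3) :
    skew x * skew x * skew x = -(x ⬝ᵥ x) • skew x := by
  ext i j
  fin_cases i <;> fin_cases j <;>
    simp [skew, mul_apply, dotProduct, Fin.sum_univ_three] <;> ring

theorem trace_mul_skew (M : M3) (x : V3) : (M * skew x).trace = -2 * (x ⬝ᵥ psi M) := by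
  simp [trace, psi, skew, mul_apply, dotProduct, Fin.sum_univ_three]
  ring

theorem Ra_add {u : V3} (hu : u ⬝ᵥ u = 1) (a b : ℝ) : Ra (a + b) u = Ra a u * Ra b u := by
  have hK3 := skew_mul_skew_mul_skew u
  rw [hu, neg_smul, one_smul] at hK3
  simp only [Ra, add_mul, mul_add, one_mul, mul_one, smul_mul_assoc, mul_smul_comm,
    ← mul_assoc, hK3, neg_mul, Real.sin_add, Real.cos_add]
  module

theorem Ra_zero (u : V3) : Ra 0 u = 1 := by simp [Ra]

theorem transpose_Ra (θ : ℝ) (u : V3) : (Ra θ u)ᵀ = Ra (-θ) u := by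
  simp [Ra, transpose_skew, transpose_mul]

theorem Ra_mem_SO3 {u : V3} (hu : u ⬝ᵥ u = 1) (θ : ℝ) : Ra θ u ∈ SO3 := by
  have horth : (Ra θ u)ᵀ * Ra θ u = 1 := by
    rw [transpose_Ra, ← Ra_add hu, neg_add_cancel, Ra_zero]
  refine ⟨horth, ?_⟩
  have hsq : (Ra θ u).det ^ 2 = 1 := by
    simpa [sq, det_mul, det_transpose] using congrArg det horth
  have hnonneg : 0 ≤ (Ra θ u).det := by
    rw [← add_halves θ, Ra_add hu, det_mul]
    exact mul_self_nonneg _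
  nlinarith

theorem transpose_mem_SO3 {Q : M3} (hQ : Q ∈ SO3) : Qᵀ ∈ SO3 :=
  ⟨by rw [transpose_transpose, mul_eq_one_comm, hQ.1], by rw [det_transpose, hQ.2]⟩

theorem mulVec_cross_of_mem_SO3 {Q : M3} (hQ : Q ∈ SO3) (x y : V3) :
    Q *ᵥ (x ⨯₃ y) = (Q *ᵥ x) ⨯₃ (Q *ᵥ y) := by
  have hdual : Qᵀ *ᵥ ((Q *ᵥ x) ⨯₃ (Q *ᵥ y)) = x ⨯₃ y := by
    ext i
    have hrows : (of ![Q *ᵥ Pi.single i 1, Q *ᵥ x, Q *ᵥ y] : M3) =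
        of ![Pi.single i 1, x, y] * Qᵀ := by
      ext j k
      fin_cases j <;> simp [mul_apply, mulVec, dotProduct, mul_comm, Pi.single_apply]
    calc (Qᵀ *ᵥ ((Q *ᵥ x) ⨯₃ (Q *ᵥ y))) i
        = (Q *ᵥ Pi.single i 1) ⬝ᵥ (Q *ᵥ x) ⨯₃ (Q *ᵥ y) := by
          rw [dotProduct_comm, dotProduct_mulVec, ← mulVec_transpose, dotProduct_single, mul_one]
      _ = (of ![Q *ᵥ Pi.single i 1, Q *ᵥ x, Q *ᵥ y] : M3).det := triple_product_eq_det _ _ _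
      _ = (of ![Pi.single i 1, x, y]).det := by
          rw [hrows, det_mul, det_transpose, hQ.2, mul_one]
      _ = Pi.single i 1 ⬝ᵥ x ⨯₃ y := (triple_product_eq_det _ _ _).symm
      _ = (x ⨯₃ y) i := by rw [single_dotProduct, one_mul]
  rw [← hdual, mulVec_mulVec, mul_eq_one_comm.mp hQ.1, one_mulVec]

theorem transpose_mul_skew_mul_of_mem_SO3 {Q : M3} (hQ : Q ∈ SO3) (x : V3) :
    Qᵀ * skew x * Q = skew (Qᵀ *ᵥ x) := by
  refine mulVec_injective (funext fun y => ?_)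
  rw [← mulVec_mulVec, ← mulVec_mulVec, skew_mulVec, skew_mulVec,
    mulVec_cross_of_mem_SO3 (transpose_mem_SO3 hQ), mulVec_mulVec, hQ.1, one_mulVec]

theorem trace_mul_skew_mul_of_mem_SO3 {Q : M3} (hQ : Q ∈ SO3) (N : M3) (x : V3) :
    (N * skew x * Q).trace = -2 * (x ⬝ᵥ Q *ᵥ psi (N * Q)) := by
  have hconj : N * skew x * Q = N * Q * skew (Qᵀ *ᵥ x) := by
    rw [← transpose_mul_skew_mul_of_mem_SO3 hQ]
    simp only [← mul_assoc]
    rw [mul_assoc N Q, mul_eq_one_comm.mp hQ.1, mul_one]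
  rw [hconj, trace_mul_skew, mulVec_transpose, ← dotProduct_mulVec]

theorem dotProduct_mulVec_self_eq_zero_of_transpose_eq_neg {n : Type*} [Fintype n]
    {S : Matrix n n ℝ} (hS : Sᵀ = -S) (x : n → ℝ) : x ⬝ᵥ S *ᵥ x = 0 := by
  have hswap : x ⬝ᵥ S *ᵥ x = -(x ⬝ᵥ S *ᵥ x) :=
    calc x ⬝ᵥ S *ᵥ x = Sᵀ *ᵥ x ⬝ᵥ x := by rw [dotProduct_mulVec, mulVec_transpose]
      _ = -(x ⬝ᵥ S *ᵥ x) := by rw [hS, neg_mulVec, neg_dotProduct, dotProduct_comm]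
  linarith

section MatrixCalculus

variable {l m n : Type*} {t : ℝ}

theorem HasDerivAt.dotProduct [Fintype n] {x y : ℝ → n → ℝ} {x' y' : n → ℝ}
    (hx : HasDerivAt x x' t) (hy : HasDerivAt y y' t) :
    HasDerivAt (fun s => x s ⬝ᵥ y s) (x' ⬝ᵥ y t + x t ⬝ᵥ y') t := by
  have hsum := HasDerivAt.fun_sum (u := Finset.univ) fun i _ =>
    (hasDerivAt_pi.mp hx i).fun_mul (hasDerivAt_pi.mp hy i)
  exact hsum.congr_deriv Finset.sum_add_distrib

theorem HasDerivAt.matrix_mulVec [Fintype m] [Fintype n] {M : ℝ → Matrix m n ℝ}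
    {M' : Matrix m n ℝ} {x : ℝ → n → ℝ} {x' : n → ℝ} (hM : HasDerivAt M M' t)
    (hx : HasDerivAt x x' t) :
    HasDerivAt (fun s => M s *ᵥ x s) (M' *ᵥ x t + M t *ᵥ x') t :=
  hasDerivAt_pi.mpr fun i => (hasDerivAt_pi.mp hM i).dotProduct hx

theorem HasDerivAt.matrix_mul [Fintype l] [Fintype m] [Fintype n] {M : ℝ → Matrix l m ℝ}
    {M' : Matrix l m ℝ} {N : ℝ → Matrix m n ℝ} {N' : Matrix m n ℝ} (hM : HasDerivAt M M' t)
    (hN : HasDerivAt N N' t) :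
    HasDerivAt (fun s => M s * N s) (M' * N t + M t * N') t := by
  refine hasDerivAt_pi.mpr fun i => hasDerivAt_pi.mpr fun j => ?_
  have hcol : HasDerivAt (fun s k => N s k j) (fun k => N' k j) t :=
    hasDerivAt_pi.mpr fun k => hasDerivAt_pi.mp (hasDerivAt_pi.mp hN k) j
  refine ((hasDerivAt_pi.mp hM i).dotProduct hcol).congr_deriv ?_
  simp only [Matrix.add_apply, mul_apply']

theorem HasDerivAt.matrix_trace [Fintype n] {M : ℝ → Matrix n n ℝ} {M' : Matrix n n ℝ}
    (hM : HasDerivAt M M' t) : HasDerivAt (fun s => (M s).trace) M'.trace t :=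
  HasDerivAt.fun_sum fun i _ => hasDerivAt_pi.mp (hasDerivAt_pi.mp hM i) i

theorem HasDerivAt.dotProduct_mulVec_self [Fintype n] {J : Matrix n n ℝ} (hJ : Jᵀ = J)
    {x : ℝ → n → ℝ} {x' : n → ℝ} (hx : HasDerivAt x x' t) :
    HasDerivAt (fun s => x s ⬝ᵥ J *ᵥ x s) (2 * (x t ⬝ᵥ J *ᵥ x')) t := by
  have hd := hx.dotProduct ((hasDerivAt_const t J).matrix_mulVec hx)
  refine hd.congr_deriv ?_
  rw [zero_mulVec, zero_add, dotProduct_mulVec, ← mulVec_transpose, hJ, dotProduct_comm]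
  ring

end MatrixCalculus

theorem hasDerivAt_Ra {u : V3} (hu : u ⬝ᵥ u = 1) (θ : ℝ) :
    HasDerivAt (fun φ => Ra φ u) (Ra θ u * skew u) θ := by
  have hd := (((Real.hasDerivAt_sin θ).smul_const (skew u)).const_add 1).add
    (((Real.hasDerivAt_cos θ).const_sub 1).smul_const (skew u * skew u))
  refine hd.congr_deriv ?_
  have hK3 := skew_mul_skew_mul_skew u
  rw [hu, neg_smul, one_smul] at hK3
  simp only [Ra, add_mul, one_mul, smul_mul_assoc, hK3]
  module

theorem hasDerivAt_Ufun (A : M3) {u : V3} (hu : u ⬝ᵥ u = 1) (γ : ℝ) {R : ℝ → M3} {θ : ℝ → ℝ}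
    {w : V3} {θ' t : ℝ} (hR : HasDerivAt R (R t * skew w) t) (hθ : HasDerivAt θ θ' t) :
    HasDerivAt (fun s => Ufun A u γ (R s) (θ s))
      (2 * (w ⬝ᵥ Ra (θ t) u *ᵥ psi (A * Tmap u (R t) (θ t)))
        + θ' * (γ * θ t + 2 * (u ⬝ᵥ psi (A * Tmap u (R t) (θ t))))) t := by
  have hRa : HasDerivAt (fun s => Ra (θ s) u) (θ' • (Ra (θ t) u * skew u)) t :=
    (hasDerivAt_Ra hu (θ t)).scomp t hθ
  have htrace := ((hasDerivAt_const t A).matrix_mul (hR.matrix_mul hRa)).matrix_trace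
  have hU : (fun s => Ufun A u γ (R s) (θ s)) =
      fun s => A.trace - (A * (R s * Ra (θ s) u)).trace + γ / 2 * θ s ^ 2 := by
    funext s
    simp only [Ufun, Tmap, Matrix.mul_sub, Matrix.mul_one, trace_sub]
  rw [hU]
  refine ((htrace.const_sub _).add ((hθ.pow 2).const_mul (γ / 2))).congr_deriv ?_
  have hskew_w : (A * (R t * skew w * Ra (θ t) u)).trace
      = -2 * (w ⬝ᵥ Ra (θ t) u *ᵥ psi (A * Tmap u (R t) (θ t))) := by
    rw [← mul_assoc, ← mul_assoc, trace_mul_skew_mul_of_mem_SO3 (Ra_mem_SO3 hu _), Tmap,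
      mul_assoc]
  have hskew_u : (A * (R t * (Ra (θ t) u * skew u))).trace
      = -2 * (u ⬝ᵥ psi (A * Tmap u (R t) (θ t))) := by
    rw [Tmap, ← mul_assoc, ← mul_assoc, trace_mul_skew, mul_assoc]
  simp only [zero_mul, zero_add, Matrix.mul_add, mul_smul_comm, trace_add, trace_smul, smul_eq_mul,
    hskew_w, hskew_u]
  ring

theorem lyapunov_decrease_velocity_free_general
    (A : M3) (u : V3) (hu : u ⬝ᵥ u = 1)
    (γ kR kβ kθ : ℝ)
    (J : M3) (hJ : J.PosDef) (Γm : M3)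
    (Sm : M3) (hSm : Smᵀ = -Sm)
    (Re Rt : ℝ → M3) (θ θb : ℝ → ℝ) (ω : ℝ → V3) (t₀ : ℝ)
    (psie p q β0 : V3)
    (hpsie : psie = psi (A * Tmap u (Re t₀) (θ t₀)))
    (hp : p = psi (A * Tmap u (Rt t₀) (θb t₀)))
    (hq : q = Ra (θb t₀) u *ᵥ p)
    (hβ0 : β0 = Γm *ᵥ q)
    (hRe : HasDerivAt Re (Re t₀ * skew (ω t₀)) t₀)
    (hθ : HasDerivAt θ (-(kθ * (γ * θ t₀ + 2 * (u ⬝ᵥ psie)))) t₀)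
    (hRt : HasDerivAt Rt (Rt t₀ * skew (ω t₀ - β0)) t₀)
    (hθb : HasDerivAt θb (-(kθ * (γ * θb t₀ + 2 * (u ⬝ᵥ p)))) t₀)
    (hω : HasDerivAt ω
      (J⁻¹ *ᵥ (Sm *ᵥ ω t₀ - (2 * kR) • (Ra (θ t₀) u *ᵥ psie) - (2 * kβ) • q)) t₀) :
    HasDerivAt
      (fun t => kR * Ufun A u γ (Re t) (θ t) + kβ * Ufun A u γ (Rt t) (θb t) +
        1 / 2 * (ω t ⬝ᵥ J *ᵥ ω t))
      (-(kR * kθ * (γ * θ t₀ + 2 * (u ⬝ᵥ psie)) ^ 2)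
        - kβ * kθ * (γ * θb t₀ + 2 * (u ⬝ᵥ p)) ^ 2
        - 2 * kβ * (q ⬝ᵥ Γm *ᵥ q)) t₀ := by
  have hURe := hasDerivAt_Ufun A hu γ hRe hθ
  have hURt := hasDerivAt_Ufun A hu γ hRt hθb
  rw [← hpsie] at hURe
  rw [← hp, ← hq] at hURt
  have hJt : Jᵀ = J := by simpa using hJ.isHermitian.eq
  have hkin := hω.dotProduct_mulVec_self hJt
  refine (((hURe.const_mul kR).add (hURt.const_mul kβ)).add
    (hkin.const_mul (1 / 2))).congr_deriv ?_
  rw [mulVec_mulVec, mul_nonsing_inv J ((isUnit_iff_isUnit_det J).mp hJ.isUnit), one_mulVec,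
    dotProduct_sub, dotProduct_sub, dotProduct_mulVec_self_eq_zero_of_transpose_eq_neg hSm,
    dotProduct_smul, dotProduct_smul, sub_dotProduct, hβ0, dotProduct_comm (Γm *ᵥ q)]
  simp only [smul_eq_mul]
  ring

theorem lyapunov_decrease_velocity_free
    (A : M3) (hA : A.PosDef) (u : V3) (hu : u ⬝ᵥ u = 1)
    (γ kR kβ kθ : ℝ) (hγ : 0 < γ) (hkR : 0 < kR) (hkβ : 0 < kβ) (hkθ : 0 < kθ)
    (J : M3) (hJ : J.PosDef) (Γm : M3) (hΓ : Γm.PosDef)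
    (Sm : M3) (hSm : Smᵀ = -Sm)
    (Re Rt : ℝ → M3) (θ θb : ℝ → ℝ) (ω : ℝ → V3) (t₀ : ℝ)
    (psie p q β0 : V3)
    (hpsie : psie = psi (A * Tmap u (Re t₀) (θ t₀)))
    (hp : p = psi (A * Tmap u (Rt t₀) (θb t₀)))
    (hq : q = Ra (θb t₀) u *ᵥ p)
    (hβ0 : β0 = Γm *ᵥ q)
    (hRe : HasDerivAt Re (Re t₀ * skew (ω t₀)) t₀)
    (hθ : HasDerivAt θ (-(kθ * (γ * θ t₀ + 2 * (u ⬝ᵥ psie)))) t₀)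
    (hRt : HasDerivAt Rt (Rt t₀ * skew (ω t₀ - β0)) t₀)
    (hθb : HasDerivAt θb (-(kθ * (γ * θb t₀ + 2 * (u ⬝ᵥ p)))) t₀)
    (hω : HasDerivAt ω
      (J⁻¹ *ᵥ (Sm *ᵥ ω t₀ - (2 * kR) • (Ra (θ t₀) u *ᵥ psie) - (2 * kβ) • q)) t₀) :
    HasDerivAt
      (fun t => kR * Ufun A u γ (Re t) (θ t) + kβ * Ufun A u γ (Rt t) (θb t) +
        1 / 2 * (ω t ⬝ᵥ J *ᵥ ω t))
      (-(kR * kθ * (γ * θ t₀ + 2 * (u ⬝ᵥ psie)) ^ 2)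
        - kβ * kθ * (γ * θb t₀ + 2 * (u ⬝ᵥ p)) ^ 2
        - 2 * kβ * (q ⬝ᵥ Γm *ᵥ q)) t₀ :=
  lyapunov_decrease_velocity_free_general A u hu γ kR kβ kθ J hJ Γm Sm hSm Re Rt θ θb ω t₀ psie p q
    β0 hpsie hp hq hβ0 hRe hθ hRt hθb hω
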